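/- arXiv:2109.09079 — 4 statements merged into one kernel-verified Lean document; each statement's English description precedes it below -/
import Mathlib

section
/- The state error covariance update map ρ of the optimal unknown-input filter is monotone with respect to the Loewner order: for all positive semidefinite matrices Σ₁, Σ₂ with Σ₁ ⪯ Σ₂, one has ρ(Σ₁) ⪯ ρ(Σ₂). -/
/-!
Write `P = A Σ Aᵀ + Q`. Since `1 - W̃ C = (1 - K C)(1 - G M C)`, the update is the Joseph form
`ρ(Σ) = (1 - W̃ C) P (1 - W̃ C)ᵀ + W̃ R W̃ᵀ` evaluated at the gain `W̃ = W̃(Σ)`, and for a fixed gain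
the Joseph form is monotone in `P`. Moreover `W̃(Σ)` minimizes it over the unbiased gains, those
`L` with `L (C G) = G`: completing the square around `K(Σ)`, the Joseph form at such an `L` exceeds
its value at `W̃` by `(L - W̃) R̃ (L - W̃)ᵀ`, because `R̃ (W̃ - K)ᵀ = R̃ Mᵀ (G - K C G)ᵀ` has columns in
the range of `C G`, which `L - W̃` annihilates. With `L = W̃(Σ₂)`,
`ρ(Σ₁) ⪯ Joseph(P(Σ₁), W̃(Σ₂)) ⪯ Joseph(P(Σ₂), W̃(Σ₂)) = ρ(Σ₂)`.
-/

open Matrix BigOperators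

noncomputable section

/-- `R̃(Σ) = C (A Σ Aᵀ + Q) Cᵀ + R`. -/
def Rt {ny nz : ℕ} (A Q : Matrix (Fin ny) (Fin ny) ℝ)
    (C : Matrix (Fin nz) (Fin ny) ℝ) (R : Matrix (Fin nz) (Fin nz) ℝ)
    (S : Matrix (Fin ny) (Fin ny) ℝ) : Matrix (Fin nz) (Fin nz) ℝ :=
  C * (A * S * Aᵀ + Q) * Cᵀ + R

/-- Optimal unknown-input filter gain `M(Σ)`. -/
def Mg {ny nz nd : ℕ} (A Q : Matrix (Fin ny) (Fin ny) ℝ) (G : Matrix (Fin ny) (Fin nd) ℝ)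
    (C : Matrix (Fin nz) (Fin ny) ℝ) (R : Matrix (Fin nz) (Fin nz) ℝ)
    (S : Matrix (Fin ny) (Fin ny) ℝ) : Matrix (Fin nd) (Fin nz) ℝ :=
  ((C * G)ᵀ * (Rt A Q C R S)⁻¹ * (C * G))⁻¹ * (C * G)ᵀ * (Rt A Q C R S)⁻¹

/-- Optimal state filter gain `K(Σ)`. -/
def Kg {ny nz : ℕ} (A Q : Matrix (Fin ny) (Fin ny) ℝ)
    (C : Matrix (Fin nz) (Fin ny) ℝ) (R : Matrix (Fin nz) (Fin nz) ℝ)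
    (S : Matrix (Fin ny) (Fin ny) ℝ) : Matrix (Fin ny) (Fin nz) ℝ :=
  (A * S * Aᵀ + Q) * Cᵀ * (Rt A Q C R S)⁻¹

/-- Closed loop matrix `Ã(Σ)`. -/
def Atil {ny nz nd : ℕ} (A Q : Matrix (Fin ny) (Fin ny) ℝ) (G : Matrix (Fin ny) (Fin nd) ℝ)
    (C : Matrix (Fin nz) (Fin ny) ℝ) (R : Matrix (Fin nz) (Fin nz) ℝ)
    (S : Matrix (Fin ny) (Fin ny) ℝ) : Matrix (Fin ny) (Fin ny) ℝ :=
  (1 - Kg A Q C R S * C) * (1 - G * Mg A Q G C R S * C) * A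

/-- `F̃(Σ)`. -/
def Ftil {ny nz nd : ℕ} (A Q : Matrix (Fin ny) (Fin ny) ℝ) (G : Matrix (Fin ny) (Fin nd) ℝ)
    (C : Matrix (Fin nz) (Fin ny) ℝ) (R : Matrix (Fin nz) (Fin nz) ℝ)
    (S : Matrix (Fin ny) (Fin ny) ℝ) : Matrix (Fin ny) (Fin ny) ℝ :=
  -((1 - Kg A Q C R S * C) * (1 - G * Mg A Q G C R S * C))

/-- `W̃(Σ)`. -/
def Wtil {ny nz nd : ℕ} (A Q : Matrix (Fin ny) (Fin ny) ℝ) (G : Matrix (Fin ny) (Fin nd) ℝ)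
    (C : Matrix (Fin nz) (Fin ny) ℝ) (R : Matrix (Fin nz) (Fin nz) ℝ)
    (S : Matrix (Fin ny) (Fin ny) ℝ) : Matrix (Fin ny) (Fin nz) ℝ :=
  G * Mg A Q G C R S - Kg A Q C R S * C * G * Mg A Q G C R S + Kg A Q C R S

/-- The state error covariance update map `ρ(Σ)`. -/
def rho {ny nz nd : ℕ} (A Q : Matrix (Fin ny) (Fin ny) ℝ) (G : Matrix (Fin ny) (Fin nd) ℝ)
    (C : Matrix (Fin nz) (Fin ny) ℝ) (R : Matrix (Fin nz) (Fin nz) ℝ)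
    (S : Matrix (Fin ny) (Fin ny) ℝ) : Matrix (Fin ny) (Fin ny) ℝ :=
  Atil A Q G C R S * S * (Atil A Q G C R S)ᵀ
    + Ftil A Q G C R S * Q * (Ftil A Q G C R S)ᵀ
    + Wtil A Q G C R S * R * (Wtil A Q G C R S)ᵀ

/-- The unknown-input error covariance update map `ρᵈ(Σ)`. -/
def rhod {ny nz nd : ℕ} (A Q : Matrix (Fin ny) (Fin ny) ℝ) (G : Matrix (Fin ny) (Fin nd) ℝ)
    (C : Matrix (Fin nz) (Fin ny) ℝ) (R : Matrix (Fin nz) (Fin nz) ℝ)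
    (S : Matrix (Fin ny) (Fin ny) ℝ) : Matrix (Fin nd) (Fin nd) ℝ :=
  ((C * G)ᵀ * (Rt A Q C R S)⁻¹ * (C * G))⁻¹

namespace Matrix

variable {m n : Type*}

theorem PosSemidef.isSymm {M : Matrix n n ℝ} (hM : M.PosSemidef) : M.IsSymm :=
  isHermitian_iff_isSymm.mp hM.isHermitian

variable [Fintype n]

theorem mulVec_injective_of_rank_eq_card {K : Type*} [Field K] {F : Matrix m n K}
    (hF : F.rank = Fintype.card n) : Function.Injective F.mulVec := by
  have h := F.mulVecLin.finrank_range_add_finrank_ker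
  rw [Module.finrank_fintype_fun_eq_card, ← Matrix.rank, hF] at h
  have hker : LinearMap.ker F.mulVecLin = ⊥ := Submodule.finrank_eq_zero.mp (by omega)
  exact LinearMap.ker_eq_bot.mp hker

variable [Fintype m]

theorem PosSemidef.mul_mul_transpose_same {M : Matrix n n ℝ} (hM : M.PosSemidef)
    (B : Matrix m n ℝ) : (B * M * Bᵀ).PosSemidef := by
  simpa only [conjTranspose_eq_transpose_of_trivial] using hM.mul_mul_conjTranspose_same B

theorem PosDef.transpose_mul_mul_of_rank_eq_card {M : Matrix m m ℝ} (hM : M.PosDef)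
    {F : Matrix m n ℝ} (hF : F.rank = Fintype.card n) : (Fᵀ * M * F).PosDef := by
  simpa only [conjTranspose_eq_transpose_of_trivial] using
    hM.conjTranspose_mul_mul_same (mulVec_injective_of_rank_eq_card hF)

end Matrix

section JosephForm

variable {α : Type*} [CommRing α] {m n : Type*} [Fintype m] [Fintype n] [DecidableEq n]

def josephCov (P : Matrix n n α) (C : Matrix m n α) (R : Matrix m m α) (L : Matrix n m α) :
    Matrix n n α :=
  (1 - L * C) * P * (1 - L * C)ᵀ + L * R * Lᵀ

theorem josephCov_sub_josephCov_left (P₁ P₂ : Matrix n n α) (C : Matrix m n α)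
    (R : Matrix m m α) (L : Matrix n m α) :
    josephCov P₂ C R L - josephCov P₁ C R L = (1 - L * C) * (P₂ - P₁) * (1 - L * C)ᵀ := by
  simp only [josephCov, Matrix.mul_sub, Matrix.sub_mul]
  abel

theorem josephCov_eq_sub_sub_add (P : Matrix n n α) (C : Matrix m n α) (R : Matrix m m α)
    (L : Matrix n m α) :
    josephCov P C R L = P - L * (C * P) - P * Cᵀ * Lᵀ + L * (C * P * Cᵀ + R) * Lᵀ := by
  simp only [josephCov, Matrix.mul_sub, Matrix.sub_mul, Matrix.mul_add, Matrix.add_mul,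
    Matrix.transpose_sub, Matrix.transpose_one, Matrix.transpose_mul, Matrix.mul_one,
    Matrix.one_mul, Matrix.mul_assoc]
  abel

theorem josephCov_sub_josephCov_right {P : Matrix n n α} {C : Matrix m n α} {R : Matrix m m α}
    (hP : P.IsSymm) (hR : R.IsSymm) {K L L' : Matrix n m α}
    (hK : K * (C * P * Cᵀ + R) = P * Cᵀ)
    (horth : (L - L') * (C * P * Cᵀ + R) * (L' - K)ᵀ = 0) :
    josephCov P C R L - josephCov P C R L' =
      (L - L') * (C * P * Cᵀ + R) * (L - L')ᵀ := by
  set S := C * P * Cᵀ + R with hSdef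
  have hS : Sᵀ = S := by
    simp only [hSdef, transpose_add, transpose_mul, transpose_transpose, hP.eq, hR.eq,
      Matrix.mul_assoc]
  have hKt : S * Kᵀ = C * P := by
    simpa only [transpose_mul, transpose_transpose, hS, hP.eq] using congrArg transpose hK
  have horth' : (L' - K) * S * (L - L')ᵀ = 0 := by
    simpa only [transpose_mul, transpose_transpose, transpose_zero, hS, Matrix.mul_assoc]
      using congrArg transpose horth
  rw [josephCov_eq_sub_sub_add, josephCov_eq_sub_sub_add, ← hSdef, ← hKt, ← hK]
  calc _ = (L - L') * S * (L - L')ᵀ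
          + ((L - L') * S * (L' - K)ᵀ + (L' - K) * S * (L - L')ᵀ) := by
        simp only [Matrix.mul_sub, Matrix.sub_mul, Matrix.transpose_sub, Matrix.mul_assoc]
        abel
    _ = _ := by rw [horth, horth', add_zero, add_zero]

end JosephForm

section UnknownInputFilter

variable {ny nz nd : ℕ} {A Q : Matrix (Fin ny) (Fin ny) ℝ} {G : Matrix (Fin ny) (Fin nd) ℝ}
  {C : Matrix (Fin nz) (Fin ny) ℝ} {R : Matrix (Fin nz) (Fin nz) ℝ}
  {S : Matrix (Fin ny) (Fin ny) ℝ}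

theorem one_sub_Wtil_mul :
    1 - Wtil A Q G C R S * C = (1 - Kg A Q C R S * C) * (1 - G * Mg A Q G C R S * C) := by
  simp only [Wtil, Matrix.mul_sub, Matrix.sub_mul, Matrix.add_mul, Matrix.mul_one,
    Matrix.one_mul, Matrix.mul_assoc]
  abel

theorem rho_eq_josephCov :
    rho A Q G C R S = josephCov (A * S * Aᵀ + Q) C R (Wtil A Q G C R S) := by
  rw [josephCov, one_sub_Wtil_mul, rho, Atil, Ftil]
  simp only [Matrix.mul_add, Matrix.add_mul, transpose_mul, transpose_neg, Matrix.neg_mul,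
    Matrix.mul_neg, neg_neg, Matrix.mul_assoc]

theorem Rt_posDef (hQ : Q.PosSemidef) (hR : R.PosDef) (hS : S.PosSemidef) :
    (Rt A Q C R S).PosDef :=
  PosDef.posSemidef_add (((hS.mul_mul_transpose_same A).add hQ).mul_mul_transpose_same C) hR

theorem Kg_mul_Rt (hRt : (Rt A Q C R S).PosDef) :
    Kg A Q C R S * Rt A Q C R S = (A * S * Aᵀ + Q) * Cᵀ :=
  nonsing_inv_mul_cancel_right _ _ hRt.det_pos.ne'.isUnit

theorem Wtil_mul_CG (hRt : (Rt A Q C R S).PosDef) (hF : (C * G).rank = nd) :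
    Wtil A Q G C R S * (C * G) = G := by
  have hE := hRt.inv.transpose_mul_mul_of_rank_eq_card (hF.trans (Fintype.card_fin nd).symm)
  have hM : Mg A Q G C R S * (C * G) = 1 := by
    rw [Mg, Matrix.mul_assoc, Matrix.mul_assoc, ← Matrix.mul_assoc (C * G)ᵀ]
    exact nonsing_inv_mul _ hE.det_pos.ne'.isUnit
  simp only [Wtil, Matrix.add_mul, Matrix.sub_mul, Matrix.mul_assoc, hM, Matrix.mul_one]
  abel

theorem Wtil_orthogonal (hRt : (Rt A Q C R S).PosDef) (hF : (C * G).rank = nd)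
    {L : Matrix (Fin ny) (Fin nz) ℝ} (hL : L * (C * G) = G) :
    (L - Wtil A Q G C R S) * Rt A Q C R S * (Wtil A Q G C R S - Kg A Q C R S)ᵀ = 0 := by
  have hRt_symm : (Rt A Q C R S)ᵀ = Rt A Q C R S := hRt.posSemidef.isSymm.eq
  have hL_sub : (L - Wtil A Q G C R S) * (C * G) = 0 := by
    rw [Matrix.sub_mul, hL, Wtil_mul_CG hRt hF, sub_self]
  have hWtil_sub : Wtil A Q G C R S - Kg A Q C R S
      = (G - Kg A Q C R S * (C * G)) * Mg A Q G C R S := by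
    simp only [Wtil, Matrix.sub_mul, Matrix.mul_assoc]
    abel
  have hRt_Mg : Rt A Q C R S * (Mg A Q G C R S)ᵀ
      = C * G * ((C * G)ᵀ * (Rt A Q C R S)⁻¹ * (C * G))⁻¹ᵀ := by
    rw [Mg, transpose_mul, transpose_mul, transpose_nonsing_inv, hRt_symm, transpose_transpose,
      ← Matrix.mul_assoc, mul_nonsing_inv _ hRt.det_pos.ne'.isUnit, Matrix.one_mul]
  calc (L - Wtil A Q G C R S) * Rt A Q C R S * (Wtil A Q G C R S - Kg A Q C R S)ᵀ
      = (L - Wtil A Q G C R S) * (Rt A Q C R S * (Mg A Q G C R S)ᵀ)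
          * (G - Kg A Q C R S * (C * G))ᵀ := by
        rw [hWtil_sub, transpose_mul]
        simp only [Matrix.mul_assoc]
    _ = (L - Wtil A Q G C R S) * (C * G)
          * (((C * G)ᵀ * (Rt A Q C R S)⁻¹ * (C * G))⁻¹ᵀ * (G - Kg A Q C R S * (C * G))ᵀ) := by
        rw [hRt_Mg]
        simp only [Matrix.mul_assoc]
    _ = 0 := by rw [hL_sub, Matrix.zero_mul]

theorem posSemidef_josephCov_sub_rho (hQ : Q.PosSemidef) (hR : R.PosDef) (hS : S.PosSemidef)
    (hF : (C * G).rank = nd) {L : Matrix (Fin ny) (Fin nz) ℝ} (hL : L * (C * G) = G) :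
    (josephCov (A * S * Aᵀ + Q) C R L - rho A Q G C R S).PosSemidef := by
  have hRt : (Rt A Q C R S).PosDef := Rt_posDef hQ hR hS
  rw [rho_eq_josephCov, josephCov_sub_josephCov_right ((hS.mul_mul_transpose_same A).add hQ).isSymm
    hR.posSemidef.isSymm (Kg_mul_Rt hRt) (Wtil_orthogonal hRt hF hL)]
  exact hRt.posSemidef.mul_mul_transpose_same _

end UnknownInputFilter

theorem state_update_monotone_general {ny nz nd : ℕ}
    (A Q : Matrix (Fin ny) (Fin ny) ℝ) (G : Matrix (Fin ny) (Fin nd) ℝ)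
    (C : Matrix (Fin nz) (Fin ny) ℝ) (R : Matrix (Fin nz) (Fin nz) ℝ)
    (hQ : Q.PosDef) (hR : R.PosDef) (hF : (C * G).rank = nd)
    (S1 S2 : Matrix (Fin ny) (Fin ny) ℝ)
    (h1 : S1.PosSemidef) (hle : (S2 - S1).PosSemidef) :
    (rho A Q G C R S2 - rho A Q G C R S1).PosSemidef := by
  have h2 : S2.PosSemidef := by simpa using h1.add hle
  set L₂ := Wtil A Q G C R S2
  have hL₂ : L₂ * (C * G) = G := Wtil_mul_CG (Rt_posDef hQ.posSemidef hR h2) hF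
  have hcov : rho A Q G C R S2 - josephCov (A * S1 * Aᵀ + Q) C R L₂
      = (1 - L₂ * C) * (A * (S2 - S1) * Aᵀ) * (1 - L₂ * C)ᵀ := by
    rw [rho_eq_josephCov, josephCov_sub_josephCov_left]
    congr 2
    simp only [Matrix.mul_sub, Matrix.sub_mul]
    abel
  rw [← sub_add_sub_cancel _ (josephCov (A * S1 * Aᵀ + Q) C R L₂), hcov]
  exact ((hle.mul_mul_transpose_same A).mul_mul_transpose_same _).add
    (posSemidef_josephCov_sub_rho hQ.posSemidef hR h1 hF hL₂)

/-- the state error covariance update map `ρ` is monotone w.r.t. the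
Loewner order: if `Σ₁ ⪯ Σ₂` (both PSD) then `ρ(Σ₁) ⪯ ρ(Σ₂)`. -/
theorem state_update_monotone {ny nz nd : ℕ}
    (A Q : Matrix (Fin ny) (Fin ny) ℝ) (G : Matrix (Fin ny) (Fin nd) ℝ)
    (C : Matrix (Fin nz) (Fin ny) ℝ) (R : Matrix (Fin nz) (Fin nz) ℝ)
    (hQ : Q.PosDef) (hR : R.PosDef) (hF : (C * G).rank = nd)
    (S1 S2 : Matrix (Fin ny) (Fin ny) ℝ)
    (h1 : S1.PosSemidef) (h2 : S2.PosSemidef) (hle : (S2 - S1).PosSemidef) :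
    (rho A Q G C R S2 - rho A Q G C R S1).PosSemidef :=
  state_update_monotone_general A Q G C R hQ hR hF S1 S2 h1 hle
end
end

section
/- The state error covariance update map ρ of the optimal unknown-input filter is concave with respect to the Loewner order: for all α ∈ [0,1] and all positive semidefinite matrices Σ₁, Σ₂, one has ρ(αΣ₁ + (1−α)Σ₂) ⪰ α ρ(Σ₁) + (1−α) ρ(Σ₂). -/
open Matrix BigOperators

noncomputable section

/-!
For a gain `L`, the Joseph form `J(L, P) = (I - L C) P (I - L C)ᵀ + L R Lᵀ` is affine in `P`,
and `ρ(Σ) = J(W̃(Σ), P(Σ))` with `P(Σ) = A Σ Aᵀ + Q`. Completing the square shows that `W̃(Σ)`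
minimises `J(·, P(Σ))` over the affine set of gains `L` with `L F = G`: for such `L`,
`J(L, P(Σ)) - ρ(Σ) = E R̃(Σ) Eᵀ` with `E = L - W̃(Σ)`, because `E F = 0`. Since every `W̃(Σ)`
satisfies the constraint, `ρ` is a pointwise minimum of affine maps of `Σ`, hence concave.
-/

lemma Matrix.PosSemidef.mul_mul_transpose_same_s1 {m n : Type*} [Fintype n] [Finite m]
    {S : Matrix n n ℝ} (hS : S.PosSemidef) (B : Matrix m n ℝ) : (B * S * Bᵀ).PosSemidef := by
  simpa only [conjTranspose_eq_transpose_of_trivial] using hS.mul_mul_conjTranspose_same B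

lemma Matrix.mulVec_injective_of_rank_eq {m d : Type*} [Fintype d] {K : Type*} [Field K]
    {F : Matrix m d K} (hF : F.rank = Fintype.card d) : Function.Injective F.mulVec := by
  rw [mulVec_injective_iff, linearIndependent_iff_card_eq_finrank_span, Set.finrank,
    ← rank_eq_finrank_span_cols, hF]

namespace UIF

section GainCost

variable {m n d : Type*} [Fintype m] [Fintype n] [DecidableEq n] {𝕜 : Type*} [CommRing 𝕜]

def josephForm (C : Matrix m n 𝕜) (R : Matrix m m 𝕜) (L : Matrix n m 𝕜) (P : Matrix n n 𝕜) :
    Matrix n n 𝕜 :=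
  (1 - L * C) * P * (1 - L * C)ᵀ + L * R * Lᵀ

lemma josephForm_eq (C : Matrix m n 𝕜) (R : Matrix m m 𝕜) (L : Matrix n m 𝕜) (P : Matrix n n 𝕜) :
    josephForm C R L P = P - L * C * P - P * Cᵀ * Lᵀ + L * (C * P * Cᵀ + R) * Lᵀ := by
  simp only [josephForm, transpose_sub, transpose_one, transpose_mul, Matrix.sub_mul,
    Matrix.mul_sub, Matrix.one_mul, Matrix.mul_one, Matrix.mul_add, Matrix.add_mul,
    Matrix.mul_assoc]
  abel

lemma josephForm_affine (C : Matrix m n 𝕜) (R : Matrix m m 𝕜) (L : Matrix n m 𝕜)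
    {a b : 𝕜} (hab : a + b = 1) (P₁ P₂ : Matrix n n 𝕜) :
    josephForm C R L (a • P₁ + b • P₂) = a • josephForm C R L P₁ + b • josephForm C R L P₂ := by
  have hLRL : a • (L * R * Lᵀ) + b • (L * R * Lᵀ) = L * R * Lᵀ := by
    rw [← add_smul, hab, one_smul]
  simp only [josephForm, Matrix.mul_add, Matrix.add_mul, Matrix.mul_smul, Matrix.smul_mul,
    smul_add]
  conv_lhs => rw [← hLRL]
  abel

lemma josephForm_add_of_mul_eq_zero [Fintype d] {C : Matrix m n 𝕜} {R : Matrix m m 𝕜}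
    {P : Matrix n n 𝕜} (hP : Pᵀ = P) (hR : Rᵀ = R) {L₀ E : Matrix n m 𝕜} {N : Matrix n d 𝕜}
    {F : Matrix m d 𝕜} (hL₀ : L₀ * (C * P * Cᵀ + R) = P * Cᵀ + N * Fᵀ) (hE : E * F = 0) :
    josephForm C R (L₀ + E) P = josephForm C R L₀ P + E * (C * P * Cᵀ + R) * Eᵀ := by
  set T := C * P * Cᵀ + R with hT
  have hTt : Tᵀ = T := by simp only [hT, transpose_add, transpose_mul, transpose_transpose, hP,
    hR, Matrix.mul_assoc]
  have hEt : Fᵀ * Eᵀ = 0 := by rw [← transpose_mul, hE, transpose_zero]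
  -- The cross terms cancel because `E` annihilates `F`.
  have cross₁ : L₀ * T * Eᵀ = P * Cᵀ * Eᵀ := by
    rw [hL₀, Matrix.add_mul, Matrix.mul_assoc N, hEt, Matrix.mul_zero, add_zero]
  have cross₂ : E * T * L₀ᵀ = E * C * P := by
    have : T * L₀ᵀ = C * P + F * Nᵀ := by
      rw [← hTt, ← transpose_mul, hL₀]
      simp only [transpose_add, transpose_mul, transpose_transpose, hP]
    rw [Matrix.mul_assoc, this, Matrix.mul_add, ← Matrix.mul_assoc E F, hE, Matrix.zero_mul,
      add_zero, Matrix.mul_assoc]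
  rw [josephForm_eq, josephForm_eq, ← hT]
  simp only [transpose_add, Matrix.add_mul, Matrix.mul_add]
  rw [cross₁, cross₂]
  simp only [Matrix.mul_assoc]
  abel

end GainCost

variable {ny nz nd : ℕ} (A Q : Matrix (Fin ny) (Fin ny) ℝ) (G : Matrix (Fin ny) (Fin nd) ℝ)
  (C : Matrix (Fin nz) (Fin ny) ℝ) (R : Matrix (Fin nz) (Fin nz) ℝ) (S : Matrix (Fin ny) (Fin ny) ℝ)

lemma rho_eq_josephForm : rho A Q G C R S = josephForm C R (Wtil A Q G C R S) (A * S * Aᵀ + Q) := by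
  unfold rho josephForm Atil Ftil Wtil
  generalize Kg A Q C R S = K
  generalize Mg A Q G C R S = M
  simp only [Matrix.mul_add, Matrix.add_mul, Matrix.mul_one, Matrix.one_mul, Matrix.neg_mul,
    Matrix.mul_neg, transpose_mul, transpose_add, transpose_neg, transpose_one, Matrix.mul_assoc,
    sub_eq_add_neg, neg_add, neg_neg]
  abel

lemma Wtil_eq : Wtil A Q G C R S
    = Kg A Q C R S + (G - Kg A Q C R S * (C * G)) * Mg A Q G C R S := by
  simp only [Wtil, Matrix.sub_mul, Matrix.mul_assoc]
  abel

variable {A Q G C R S}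

lemma Rt_posDef (A C) (hQ : Q.PosSemidef) (hR : R.PosDef) (hS : S.PosSemidef) :
    (Rt A Q C R S).PosDef :=
  .posSemidef_add ((hS.mul_mul_transpose_same_s1 A).add hQ |>.mul_mul_transpose_same C) hR

lemma transpose_mul_Rt_inv_mul_posDef (A) (hQ : Q.PosSemidef) (hR : R.PosDef)
    (hF : (C * G).rank = nd) (hS : S.PosSemidef) :
    ((C * G)ᵀ * (Rt A Q C R S)⁻¹ * (C * G)).PosDef := by
  simpa only [conjTranspose_eq_transpose_of_trivial] using
    (Rt_posDef A C hQ hR hS).inv.conjTranspose_mul_mul_same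
      (mulVec_injective_of_rank_eq (hF.trans (Fintype.card_fin nd).symm))

lemma Kg_mul_Rt (hT : IsUnit (Rt A Q C R S).det) :
    Kg A Q C R S * Rt A Q C R S = (A * S * Aᵀ + Q) * Cᵀ :=
  nonsing_inv_mul_cancel_right _ _ hT

lemma Mg_mul_Rt (hT : IsUnit (Rt A Q C R S).det) :
    Mg A Q G C R S * Rt A Q C R S = rhod A Q G C R S * (C * G)ᵀ :=
  nonsing_inv_mul_cancel_right _ _ hT

lemma Mg_mul_eq_one (hD : IsUnit ((C * G)ᵀ * (Rt A Q C R S)⁻¹ * (C * G)).det) :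
    Mg A Q G C R S * (C * G) = 1 := by
  rw [Mg, Matrix.mul_assoc _ (Rt A Q C R S)⁻¹, Matrix.mul_assoc, ← Matrix.mul_assoc (C * G)ᵀ,
    nonsing_inv_mul _ hD]

lemma Wtil_mul_eq (hD : IsUnit ((C * G)ᵀ * (Rt A Q C R S)⁻¹ * (C * G)).det) :
    Wtil A Q G C R S * (C * G) = G := by
  rw [Wtil_eq, Matrix.add_mul, Matrix.mul_assoc _ (Mg A Q G C R S), Mg_mul_eq_one hD,
    Matrix.mul_one, add_sub_cancel]

lemma Wtil_mul_Rt (hT : IsUnit (Rt A Q C R S).det) :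
    Wtil A Q G C R S * Rt A Q C R S = (A * S * Aᵀ + Q) * Cᵀ
      + (G - Kg A Q C R S * (C * G)) * rhod A Q G C R S * (C * G)ᵀ := by
  rw [Wtil_eq, Matrix.add_mul, Kg_mul_Rt hT, Matrix.mul_assoc _ (Mg A Q G C R S), Mg_mul_Rt hT,
    Matrix.mul_assoc (G - _)]

theorem josephForm_sub_rho_posSemidef (hQ : Q.PosSemidef) (hR : R.PosDef)
    (hF : (C * G).rank = nd) (hS : S.PosSemidef) {L : Matrix (Fin ny) (Fin nz) ℝ}
    (hL : L * (C * G) = G) :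
    (josephForm C R L (A * S * Aᵀ + Q) - rho A Q G C R S).PosSemidef := by
  have hT := Rt_posDef A C hQ hR hS
  have hTdet : IsUnit (Rt A Q C R S).det := isUnit_iff_ne_zero.mpr hT.det_pos.ne'
  have hDdet := isUnit_iff_ne_zero.mpr (transpose_mul_Rt_inv_mul_posDef A hQ hR hF hS).det_pos.ne'
  have hP : (A * S * Aᵀ + Q)ᵀ = A * S * Aᵀ + Q :=
    (isHermitian_iff_isSymm.mp ((hS.mul_mul_transpose_same_s1 A).add hQ).isHermitian).eq
  have hE : (L - Wtil A Q G C R S) * (C * G) = 0 := by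
    rw [Matrix.sub_mul, hL, Wtil_mul_eq hDdet, sub_self]
  have hsplit := josephForm_add_of_mul_eq_zero hP (isHermitian_iff_isSymm.mp hR.isHermitian).eq
    (Wtil_mul_Rt hTdet) hE
  rw [add_sub_cancel] at hsplit
  rw [rho_eq_josephForm, hsplit, add_sub_cancel_left]
  exact hT.posSemidef.mul_mul_transpose_same_s1 _

end UIF

/-- the state error covariance update map `ρ` is concave w.r.t. the
Loewner order: for `α ∈ [0,1]` and PSD `Σ₁, Σ₂`,
`ρ(αΣ₁ + (1−α)Σ₂) ⪰ α ρ(Σ₁) + (1−α) ρ(Σ₂)`. -/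
theorem state_update_concave {ny nz nd : ℕ}
    (A Q : Matrix (Fin ny) (Fin ny) ℝ) (G : Matrix (Fin ny) (Fin nd) ℝ)
    (C : Matrix (Fin nz) (Fin ny) ℝ) (R : Matrix (Fin nz) (Fin nz) ℝ)
    (hQ : Q.PosDef) (hR : R.PosDef) (hF : (C * G).rank = nd)
    (α : ℝ) (hα0 : 0 ≤ α) (hα1 : α ≤ 1)
    (S1 S2 : Matrix (Fin ny) (Fin ny) ℝ)
    (h1 : S1.PosSemidef) (h2 : S2.PosSemidef) :
    (rho A Q G C R (α • S1 + (1 - α) • S2)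
      - (α • rho A Q G C R S1 + (1 - α) • rho A Q G C R S2)).PosSemidef := by
  have hβ : 0 ≤ 1 - α := sub_nonneg.mpr hα1
  have hS : (α • S1 + (1 - α) • S2).PosSemidef := (h1.smul hα0).add (h2.smul hβ)
  have hL := UIF.Wtil_mul_eq (isUnit_iff_ne_zero.mpr
    (UIF.transpose_mul_Rt_inv_mul_posDef A hQ.posSemidef hR hF hS).det_pos.ne')
  have hP : A * (α • S1 + (1 - α) • S2) * Aᵀ + Q
      = α • (A * S1 * Aᵀ + Q) + (1 - α) • (A * S2 * Aᵀ + Q) := by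
    simp only [Matrix.mul_add, Matrix.add_mul, Matrix.mul_smul, Matrix.smul_mul, smul_add]
    rw [add_add_add_comm, ← add_smul, add_sub_cancel, one_smul]
  rw [UIF.rho_eq_josephForm, hP, UIF.josephForm_affine _ _ _ (add_sub_cancel α 1)]
  have hsplit : ∀ J₁ J₂ ρ₁ ρ₂ : Matrix (Fin ny) (Fin ny) ℝ,
      α • J₁ + (1 - α) • J₂ - (α • ρ₁ + (1 - α) • ρ₂)
        = α • (J₁ - ρ₁) + (1 - α) • (J₂ - ρ₂) := by
    intros; simp only [smul_sub]; abel
  rw [hsplit]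
  exact ((UIF.josephForm_sub_rho_posSemidef hQ.posSemidef hR hF h1 hL).smul hα0).add
    ((UIF.josephForm_sub_rho_posSemidef hQ.posSemidef hR hF h2 hL).smul hβ)
end
end

section
/- The unknown-input error covariance update map ρᵈ is monotone with respect to the Loewner order: for all positive semidefinite matrices Σ₁, Σ₂ with Σ₁ ⪯ Σ₂, one has ρᵈ(Σ₁) ⪯ ρᵈ(Σ₂). -/
open Matrix BigOperators

noncomputable section

/-!
`R̃` is affine in `Σ` with linear part `Σ ↦ (C A) Σ (C A)ᵀ`, so `R̃` is monotone, and its values are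
positive definite. Inversion reverses the Loewner order on positive definite matrices, congruence
`X ↦ Fᵀ X F` preserves it, and the full column rank of `F` keeps `Fᵀ R̃(Σ)⁻¹ F` positive definite;
inverting once more reverses the order back.
-/

theorem Matrix.mulVec_injective_of_rank_eq_card_s7 {m n K : Type*} [Field K] [Fintype n]
    (A : Matrix m n K) (h : A.rank = Fintype.card n) : Function.Injective A.mulVec := by
  rw [mulVec_injective_iff, linearIndependent_iff_card_eq_finrank_span, ← h,
    rank_eq_finrank_span_cols]
  rfl

namespace Matrix

variable {m n R : Type*} [Fintype m] [Fintype n]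

section TrivialStar

variable [CommRing R] [PartialOrder R] [StarRing R] [TrivialStar R]

theorem PosSemidef.mul_mul_transpose_same_s7 {A : Matrix n n R} (hA : A.PosSemidef)
    (C : Matrix m n R) : (C * A * Cᵀ).PosSemidef := by
  simpa only [conjTranspose_eq_transpose_of_trivial] using hA.mul_mul_conjTranspose_same C

theorem PosSemidef.mul_mul_transpose_sub {A B : Matrix n n R} (h : (B - A).PosSemidef)
    (C : Matrix m n R) : (C * B * Cᵀ - C * A * Cᵀ).PosSemidef := by
  simpa only [Matrix.mul_sub, Matrix.sub_mul] using h.mul_mul_transpose_same_s7 C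

end TrivialStar

theorem PosDef.inv_sub_inv [DecidableEq n] {K : Type*} [Field K] [PartialOrder K] [StarRing K]
    [StarOrderedRing K] {A B : Matrix n n K} (hA : A.PosDef) (h : (B - A).PosSemidef) :
    (A⁻¹ - B⁻¹).PosSemidef := by
  have hB : B.PosDef := by simpa using hA.add_posSemidef h
  have := hA.isUnit.invertible
  have := hB.isUnit.invertible
  -- Both differences are Schur complements of the block matrix `[[B, 1], [1, A⁻¹]]`.
  have hSchur₂₂ := PosDef.fromBlocks₂₂ B 1 hA.inv
  rw [conjTranspose_one, inv_inv_of_invertible, Matrix.mul_one, Matrix.one_mul] at hSchur₂₂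
  have hSchur₁₁ := PosDef.fromBlocks₁₁ 1 A⁻¹ hB
  rw [conjTranspose_one, Matrix.mul_one, Matrix.one_mul] at hSchur₁₁
  exact hSchur₁₁.mp (hSchur₂₂.mpr h)

end Matrix

section UpdateMaps

variable {ny nz : ℕ} (A Q : Matrix (Fin ny) (Fin ny) ℝ) (C : Matrix (Fin nz) (Fin ny) ℝ)
  (R : Matrix (Fin nz) (Fin nz) ℝ)

theorem posDef_Rt {S : Matrix (Fin ny) (Fin ny) ℝ} (hS : S.PosSemidef) (hQ : Q.PosSemidef)
    (hR : R.PosDef) : (Rt A Q C R S).PosDef :=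
  hR.posSemidef_add (((hS.mul_mul_transpose_same_s7 A).add hQ).mul_mul_transpose_same_s7 C)

theorem posSemidef_Rt_sub_Rt {S₁ S₂ : Matrix (Fin ny) (Fin ny) ℝ} (h : (S₂ - S₁).PosSemidef) :
    (Rt A Q C R S₂ - Rt A Q C R S₁).PosSemidef := by
  rw [Rt, Rt, add_sub_add_right_eq_sub]
  refine PosSemidef.mul_mul_transpose_sub ?_ C
  rw [add_sub_add_right_eq_sub]
  exact h.mul_mul_transpose_sub A

end UpdateMaps

theorem input_update_monotone_general {ny nz nd : ℕ}
    (A Q : Matrix (Fin ny) (Fin ny) ℝ) (G : Matrix (Fin ny) (Fin nd) ℝ)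
    (C : Matrix (Fin nz) (Fin ny) ℝ) (R : Matrix (Fin nz) (Fin nz) ℝ)
    (hQ : Q.PosDef) (hR : R.PosDef) (hF : (C * G).rank = nd)
    (S1 S2 : Matrix (Fin ny) (Fin ny) ℝ)
    (h1 : S1.PosSemidef) (hle : (S2 - S1).PosSemidef) :
    (rhod A Q G C R S2 - rhod A Q G C R S1).PosSemidef := by
  have hFinj : Function.Injective (C * G).mulVec :=
    (C * G).mulVec_injective_of_rank_eq_card_s7 (by rw [hF, Fintype.card_fin])
  have hRt₁ : (Rt A Q C R S1).PosDef := posDef_Rt A Q C R h1 hQ.posSemidef hR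
  have hRt : (Rt A Q C R S2 - Rt A Q C R S1).PosSemidef := posSemidef_Rt_sub_Rt A Q C R hle
  have hRt₂ : (Rt A Q C R S2).PosDef := by simpa using hRt₁.add_posSemidef hRt
  have hInfo₂ : ((C * G)ᵀ * (Rt A Q C R S2)⁻¹ * (C * G)).PosDef := by
    simpa only [conjTranspose_eq_transpose_of_trivial] using
      hRt₂.inv.conjTranspose_mul_mul_same hFinj
  have hInfo : ((C * G)ᵀ * (Rt A Q C R S1)⁻¹ * (C * G)
      - (C * G)ᵀ * (Rt A Q C R S2)⁻¹ * (C * G)).PosSemidef := by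
    simpa only [transpose_transpose] using (hRt₁.inv_sub_inv hRt).mul_mul_transpose_sub (C * G)ᵀ
  exact hInfo₂.inv_sub_inv hInfo

/-- the unknown-input error covariance update map `ρᵈ` is monotone
w.r.t. the Loewner order: if `Σ₁ ⪯ Σ₂` (both PSD) then `ρᵈ(Σ₁) ⪯ ρᵈ(Σ₂)`. -/
theorem input_update_monotone {ny nz nd : ℕ}
    (A Q : Matrix (Fin ny) (Fin ny) ℝ) (G : Matrix (Fin ny) (Fin nd) ℝ)
    (C : Matrix (Fin nz) (Fin ny) ℝ) (R : Matrix (Fin nz) (Fin nz) ℝ)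
    (hQ : Q.PosDef) (hR : R.PosDef) (hF : (C * G).rank = nd)
    (S1 S2 : Matrix (Fin ny) (Fin ny) ℝ)
    (h1 : S1.PosSemidef) (h2 : S2.PosSemidef) (hle : (S2 - S1).PosSemidef) :
    (rhod A Q G C R S2 - rhod A Q G C R S1).PosSemidef :=
  input_update_monotone_general A Q G C R hQ hR hF S1 S2 h1 hle
end
end

section
/- Let γ ∈ (0,1] and suppose the information matrices H₁ := C₁ᵀR₁⁻¹C₁ and H₂ := C₂ᵀR₂⁻¹C₂ satisfy H₁ ⪯ γ⁻¹ H₂ and H₂ ⪯ γ⁻¹ H₁. Then for every positive semidefinite Σ, the unknown-input error covariance updates satisfy ρᵈ₁(Σ) ⪰ γ ρᵈ₂(Σ) and ρᵈ₂(Σ) ⪰ γ ρᵈ₁(Σ). -/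
/-! The matrix `Cᵀ (C P Cᵀ + R)⁻¹ C` is, by the Woodbury identity, `P⁻¹ - P⁻¹ (P⁻¹ + H)⁻¹ P⁻¹`
with `H = Cᵀ R⁻¹ C`, so it is monotone in the information matrix `H`; it is also antitone in the
prior covariance `P`, and scaling `P` and `R` by `γ` scales it by `γ⁻¹`. For `γ ≤ 1` these give
`Cᵢᵀ R̃ᵢ⁻¹ Cᵢ ⪯ γ⁻¹ Cⱼᵀ R̃ⱼ⁻¹ Cⱼ`; conjugating by `G` and inverting (which reverses the Loewner
order) yields `γ ρᵈⱼ ⪯ ρᵈᵢ`. -/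

open Matrix BigOperators

noncomputable section

open scoped MatrixOrder ComplexOrder

namespace Matrix

theorem mulVec_injective_of_rank_eq_s15 {K m n : Type*} [Field K] [Fintype n] {F : Matrix m n K}
    (h : F.rank = Fintype.card n) : Function.Injective F.mulVec := by
  have hdim := LinearMap.finrank_range_add_finrank_ker F.mulVecLin
  rw [← rank, h, Module.finrank_fintype_fun_eq_card, Nat.add_eq_left,
    Submodule.finrank_eq_zero, LinearMap.ker_eq_bot] at hdim
  exact hdim

variable {𝕜 m n : Type*} [RCLike 𝕜] [Fintype m] [Fintype n]

theorem conjTranspose_mul_mul_le_conjTranspose_mul_mul {A B : Matrix m m 𝕜} (hAB : A ≤ B)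
    (M : Matrix m n 𝕜) : Mᴴ * A * M ≤ Mᴴ * B * M := by
  rw [le_iff, ← Matrix.sub_mul, ← Matrix.mul_sub]
  exact (le_iff.mp hAB).conjTranspose_mul_mul_same M

section

variable [DecidableEq m] [DecidableEq n]

lemma PosDef.inv_inv {P : Matrix n n 𝕜} (hP : P.PosDef) : P⁻¹⁻¹ = P :=
  nonsing_inv_nonsing_inv P ((isUnit_iff_isUnit_det P).1 hP.isUnit)

theorem inv_add_conjTranspose_mul_inv_mul {P : Matrix n n 𝕜} {R : Matrix m m 𝕜}
    (hP : P.PosDef) (hR : R.PosDef) (C : Matrix m n 𝕜) :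
    (P⁻¹ + Cᴴ * R⁻¹ * C)⁻¹ = P - P * Cᴴ * (C * P * Cᴴ + R)⁻¹ * C * P := by
  have hS : (R + C * P * Cᴴ).PosDef :=
    hR.add_posSemidef (hP.posSemidef.mul_mul_conjTranspose_same C)
  rw [add_mul_mul_inv_eq_sub _ _ _ _ hP.inv.isUnit hR.inv.isUnit
    (by rw [hP.inv_inv, hR.inv_inv]; exact hS.isUnit), hP.inv_inv, hR.inv_inv, add_comm R]

/-- Writing `B - A = Xᴴ X`, the Woodbury identity gives
`A⁻¹ - B⁻¹ = (X A⁻¹)ᴴ (X A⁻¹ Xᴴ + 1)⁻¹ (X A⁻¹)`. -/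
theorem PosDef.inv_le_inv {A B : Matrix n n 𝕜} (hA : A.PosDef) (hAB : A ≤ B) : B⁻¹ ≤ A⁻¹ := by
  obtain ⟨X, hX⟩ := CStarAlgebra.nonneg_iff_eq_star_mul_self.mp (sub_nonneg.mpr hAB)
  have hB : B = A⁻¹⁻¹ + Xᴴ * 1⁻¹ * X := by
    rw [hA.inv_inv, inv_one, mul_one, ← star_eq_conjTranspose, ← hX, add_sub_cancel]
  have hW := inv_add_conjTranspose_mul_inv_mul hA.inv PosDef.one X
  rw [← hB] at hW
  rw [hW, le_iff, sub_sub_cancel]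
  have hM : (X * A⁻¹ * Xᴴ + 1).PosDef :=
    PosDef.one.posSemidef_add (hA.inv.posSemidef.mul_mul_conjTranspose_same X)
  convert hM.inv.posSemidef.conjTranspose_mul_mul_same (X * A⁻¹) using 1
  rw [conjTranspose_mul, hA.inv.isHermitian.eq]
  simp only [Matrix.mul_assoc]

lemma inv_real_smul {X : Matrix n n 𝕜} (hX : IsUnit X) {c : ℝ} (hc : c ≠ 0) :
    (c • X)⁻¹ = c⁻¹ • X⁻¹ :=
  inv_eq_left_inv <| by
    rw [smul_mul_smul_comm, inv_mul_cancel₀ hc, one_smul,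
      nonsing_inv_mul X ((isUnit_iff_isUnit_det X).1 hX)]

end

section

variable [DecidableEq m]

theorem conjTranspose_mul_inv_mul_anti {P P' : Matrix n n 𝕜} {R : Matrix m m 𝕜}
    (hP : P.PosDef) (hR : R.PosDef) (hPP' : P ≤ P') (C : Matrix m n 𝕜) :
    Cᴴ * (C * P' * Cᴴ + R)⁻¹ * C ≤ Cᴴ * (C * P * Cᴴ + R)⁻¹ * C := by
  have hS : (C * P * Cᴴ + R).PosDef :=
    PosDef.posSemidef_add (hP.posSemidef.mul_mul_conjTranspose_same C) hR
  have hSS' : C * P * Cᴴ + R ≤ C * P' * Cᴴ + R := by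
    simpa using add_le_add_left (conjTranspose_mul_mul_le_conjTranspose_mul_mul hPP' Cᴴ) R
  simpa using conjTranspose_mul_mul_le_conjTranspose_mul_mul (hS.inv_le_inv hSS') C

end

variable [DecidableEq m] [DecidableEq n]

theorem conjTranspose_mul_inv_mul_eq_sub {P : Matrix n n 𝕜} {R : Matrix m m 𝕜}
    (hP : P.PosDef) (hR : R.PosDef) (C : Matrix m n 𝕜) :
    Cᴴ * (C * P * Cᴴ + R)⁻¹ * C = P⁻¹ - P⁻¹ * (P⁻¹ + Cᴴ * R⁻¹ * C)⁻¹ * P⁻¹ := by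
  have hPdet := (isUnit_iff_isUnit_det P).1 hP.isUnit
  rw [inv_add_conjTranspose_mul_inv_mul hP hR C]
  simp only [Matrix.mul_sub, Matrix.sub_mul, ← Matrix.mul_assoc, nonsing_inv_mul P hPdet,
    Matrix.one_mul]
  simp only [Matrix.mul_assoc, mul_nonsing_inv P hPdet, Matrix.mul_one, sub_sub_cancel]

theorem conjTranspose_mul_inv_mul_mono {P : Matrix n n 𝕜} {R R' : Matrix m m 𝕜}
    (hP : P.PosDef) (hR : R.PosDef) (hR' : R'.PosDef) {C C' : Matrix m n 𝕜}
    (h : Cᴴ * R⁻¹ * C ≤ C'ᴴ * R'⁻¹ * C') :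
    Cᴴ * (C * P * Cᴴ + R)⁻¹ * C ≤ C'ᴴ * (C' * P * C'ᴴ + R')⁻¹ * C' := by
  rw [conjTranspose_mul_inv_mul_eq_sub hP hR, conjTranspose_mul_inv_mul_eq_sub hP hR']
  have hM : (P⁻¹ + Cᴴ * R⁻¹ * C).PosDef :=
    hP.inv.add_posSemidef (hR.inv.posSemidef.conjTranspose_mul_mul_same C)
  have key := conjTranspose_mul_mul_le_conjTranspose_mul_mul
    (hM.inv_le_inv (add_le_add le_rfl h)) P⁻¹
  rw [hP.inv.isHermitian.eq] at key
  exact sub_le_sub_left key _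

theorem conjTranspose_mul_inv_mul_le_inv_smul {P : Matrix n n 𝕜} {R₁ R₂ : Matrix m m 𝕜}
    (hP : P.PosDef) (hR₁ : R₁.PosDef) (hR₂ : R₂.PosDef) {C₁ C₂ : Matrix m n 𝕜}
    {γ : ℝ} (hγ0 : 0 < γ) (hγ1 : γ ≤ 1)
    (h : C₁ᴴ * R₁⁻¹ * C₁ ≤ γ⁻¹ • (C₂ᴴ * R₂⁻¹ * C₂)) :
    C₁ᴴ * (C₁ * P * C₁ᴴ + R₁)⁻¹ * C₁ ≤ γ⁻¹ • (C₂ᴴ * (C₂ * P * C₂ᴴ + R₂)⁻¹ * C₂) := by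
  have hγP : γ • P ≤ P := by
    rw [le_iff, show P - γ • P = (1 - γ) • P by rw [sub_smul, one_smul]]
    exact hP.posSemidef.smul (sub_nonneg.mpr hγ1)
  have hscale : C₂ * (γ • P) * C₂ᴴ + γ • R₂ = γ • (C₂ * P * C₂ᴴ + R₂) := by
    simp only [smul_add, Matrix.mul_smul, Matrix.smul_mul]
  have hS₂ : (C₂ * P * C₂ᴴ + R₂).PosDef :=
    PosDef.posSemidef_add (hP.posSemidef.mul_mul_conjTranspose_same C₂) hR₂
  calc C₁ᴴ * (C₁ * P * C₁ᴴ + R₁)⁻¹ * C₁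
      ≤ C₂ᴴ * (C₂ * P * C₂ᴴ + γ • R₂)⁻¹ * C₂ :=
        conjTranspose_mul_inv_mul_mono hP hR₁ (hR₂.smul hγ0) <| by
          rwa [inv_real_smul hR₂.isUnit hγ0.ne', Matrix.mul_smul, Matrix.smul_mul]
    _ ≤ C₂ᴴ * (C₂ * (γ • P) * C₂ᴴ + γ • R₂)⁻¹ * C₂ :=
        conjTranspose_mul_inv_mul_anti (hP.smul hγ0) (hR₂.smul hγ0) hγP C₂
    _ = γ⁻¹ • (C₂ᴴ * (C₂ * P * C₂ᴴ + R₂)⁻¹ * C₂) := by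
        rw [hscale, inv_real_smul hS₂.isUnit hγ0.ne', Matrix.mul_smul, Matrix.smul_mul]

theorem PosDef.smul_inv_le_inv {N₁ N₂ : Matrix n n 𝕜} (hN₁ : N₁.PosDef) {γ : ℝ} (hγ : 0 < γ)
    (h : N₁ ≤ γ⁻¹ • N₂) : γ • N₂⁻¹ ≤ N₁⁻¹ := by
  have hB : (γ⁻¹ • N₂).PosDef := by simpa using hN₁.add_posSemidef (le_iff.mp h)
  have hN₂ : N₂.PosDef := by simpa [smul_smul, hγ.ne'] using hB.smul hγ
  have := hN₁.inv_le_inv h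
  rwa [inv_real_smul hN₂.isUnit (inv_ne_zero hγ.ne'), _root_.inv_inv] at this

end Matrix

theorem smul_rhod_le_rhod {ny nz nd : ℕ} (A Q : Matrix (Fin ny) (Fin ny) ℝ)
    (G : Matrix (Fin ny) (Fin nd) ℝ) (C₁ C₂ : Matrix (Fin nz) (Fin ny) ℝ)
    (R₁ R₂ : Matrix (Fin nz) (Fin nz) ℝ) (hQ : Q.PosDef) (hR₁ : R₁.PosDef) (hR₂ : R₂.PosDef)
    (hF₁ : (C₁ * G).rank = nd) {γ : ℝ} (hγ0 : 0 < γ) (hγ1 : γ ≤ 1)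
    (h : C₁ᵀ * R₁⁻¹ * C₁ ≤ γ⁻¹ • (C₂ᵀ * R₂⁻¹ * C₂))
    {S : Matrix (Fin ny) (Fin ny) ℝ} (hS : S.PosSemidef) :
    γ • rhod A Q G C₂ R₂ S ≤ rhod A Q G C₁ R₁ S := by
  have hP : (A * S * Aᵀ + Q).PosDef :=
    PosDef.posSemidef_add (by simpa using hS.mul_mul_conjTranspose_same A) hQ
  have hRt₁ : (Rt A Q C₁ R₁ S).PosDef :=
    PosDef.posSemidef_add (by simpa using hP.posSemidef.mul_mul_conjTranspose_same C₁) hR₁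
  have hN₁ : ((C₁ * G)ᵀ * (Rt A Q C₁ R₁ S)⁻¹ * (C₁ * G)).PosDef := by
    simpa using hRt₁.inv.conjTranspose_mul_mul_same
      (mulVec_injective_of_rank_eq_s15 (F := C₁ * G) (by rw [hF₁, Fintype.card_fin]))
  have hN : (C₁ * G)ᵀ * (Rt A Q C₁ R₁ S)⁻¹ * (C₁ * G)
      ≤ γ⁻¹ • ((C₂ * G)ᵀ * (Rt A Q C₂ R₂ S)⁻¹ * (C₂ * G)) := by
    have := conjTranspose_mul_mul_le_conjTranspose_mul_mul
      (conjTranspose_mul_inv_mul_le_inv_smul hP hR₁ hR₂ hγ0 hγ1 (by simpa using h)) G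
    simpa [Rt, Matrix.mul_assoc, Matrix.transpose_mul] using this
  exact hN₁.smul_inv_le_inv hγ0 hN

theorem input_update_continuity_general {ny nz nd : ℕ}
    (A Q : Matrix (Fin ny) (Fin ny) ℝ) (G : Matrix (Fin ny) (Fin nd) ℝ)
    (C1 C2 : Matrix (Fin nz) (Fin ny) ℝ) (R1 R2 : Matrix (Fin nz) (Fin nz) ℝ)
    (hQ : Q.PosDef) (hR1 : R1.PosDef) (hR2 : R2.PosDef)
    (hF1 : (C1 * G).rank = nd) (hF2 : (C2 * G).rank = nd)
    (γ : ℝ) (hγ0 : 0 < γ) (hγ1 : γ ≤ 1)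
    (h12 : (γ⁻¹ • (C2ᵀ * R2⁻¹ * C2) - C1ᵀ * R1⁻¹ * C1).PosSemidef)
    (h21 : (γ⁻¹ • (C1ᵀ * R1⁻¹ * C1) - C2ᵀ * R2⁻¹ * C2).PosSemidef) :
    ∀ S : Matrix (Fin ny) (Fin ny) ℝ, S.PosSemidef →
      (rhod A Q G C1 R1 S - γ • rhod A Q G C2 R2 S).PosSemidef ∧
      (rhod A Q G C2 R2 S - γ • rhod A Q G C1 R1 S).PosSemidef := fun _ hS =>
  ⟨smul_rhod_le_rhod A Q G C1 C2 R1 R2 hQ hR1 hR2 hF1 hγ0 hγ1 h12 hS,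
    smul_rhod_le_rhod A Q G C2 C1 R2 R1 hQ hR2 hR1 hF2 hγ0 hγ1 h21 hS⟩

/-- if the information matrices `H_i = C_iᵀ R_i⁻¹ C_i` of two sensor
models satisfy `H₁ ⪯ γ⁻¹H₂` and `H₂ ⪯ γ⁻¹H₁` for some `γ ∈ (0,1]`, then for every
PSD `Σ` the unknown-input covariance updates satisfy `ρᵈ₁(Σ) ⪰ γρᵈ₂(Σ)` and
`ρᵈ₂(Σ) ⪰ γρᵈ₁(Σ)`. -/
theorem input_update_continuity {ny nz nd : ℕ}
    (A Q : Matrix (Fin ny) (Fin ny) ℝ) (G : Matrix (Fin ny) (Fin nd) ℝ)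
    (C1 C2 : Matrix (Fin nz) (Fin ny) ℝ) (R1 R2 : Matrix (Fin nz) (Fin nz) ℝ)
    (hA : IsUnit A.det) (hQ : Q.PosDef) (hR1 : R1.PosDef) (hR2 : R2.PosDef)
    (hF1 : (C1 * G).rank = nd) (hF2 : (C2 * G).rank = nd)
    (γ : ℝ) (hγ0 : 0 < γ) (hγ1 : γ ≤ 1)
    (h12 : (γ⁻¹ • (C2ᵀ * R2⁻¹ * C2) - C1ᵀ * R1⁻¹ * C1).PosSemidef)
    (h21 : (γ⁻¹ • (C1ᵀ * R1⁻¹ * C1) - C2ᵀ * R2⁻¹ * C2).PosSemidef) :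
    ∀ S : Matrix (Fin ny) (Fin ny) ℝ, S.PosSemidef →
      (rhod A Q G C1 R1 S - γ • rhod A Q G C2 R2 S).PosSemidef ∧
      (rhod A Q G C2 R2 S - γ • rhod A Q G C1 R1 S).PosSemidef :=
  input_update_continuity_general A Q G C1 C2 R1 R2 hQ hR1 hR2 hF1 hF2 γ hγ0 hγ1 h12 h21
end
end
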